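/- For any fixed integer s ≥ 2 and any arithmetical function h with h(n) = O(n^ε) for every ε > 0, the sum ∑_{dl ≤ x} h(d)/d^s (over pairs d·l ≤ x) equals H_h(s+1)·x - ∑_{d ≤ x} (h(d)/d^s) ϑ(x/d) - H_h(s)/2 + O(x^{1-s+ε}), where ϑ(t) = t - ⌊t⌋ - 1/2 and H_h(α) = ∑_{n≥1} h(n)/n^α. -/
import Mathlib


open Finset Filter Asymptotics
set_option maxHeartbeats 1000000

lemma tail_bound (m : ℕ) (hm : 2 ≤ m) (h : ℕ → ℂ) (C c δ : ℝ)
    (hC : 0 ≤ C) (hc : 0 < c) (hc2 : c ≤ 1/2) (hδ : 0 < δ) (hδ2 : δ ≤ 1/2)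
    (N₀ : ℕ) (hb : ∀ n : ℕ, N₀ ≤ n → ‖h n‖ ≤ C * (n : ℝ) ^ c) :
    ∃ K : ℝ, 0 ≤ K ∧ ∀ N : ℕ, N₀ ≤ N →
      ‖(∑' n : ℕ, h (n + 1) / ((n + 1 : ℕ) : ℂ) ^ m)
        - ∑ d ∈ Finset.Icc 1 N, h d / (d : ℂ) ^ m‖
        ≤ K * ((N : ℝ) + 1) ^ (c + δ + 1 - m) := by
  set g : ℕ → ℂ := fun n => h (n + 1) / ((n + 1 : ℕ) : ℂ) ^ m with hg
  have hpos : ∀ n : ℕ, (0:ℝ) < (n : ℝ) + 1 := fun n => by positivity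
  have hgnorm : ∀ n : ℕ, ‖g n‖ = ‖h (n + 1)‖ / ((n : ℝ) + 1) ^ ((m : ℝ)) := by
    intro n
    rw [hg]
    simp only [norm_div, norm_pow, Complex.norm_natCast]
    rw [Real.rpow_natCast]
    push_cast
    ring
  have hgb : ∀ n : ℕ, N₀ ≤ n → ‖g n‖ ≤ C * ((n : ℝ) + 1) ^ (c - m) := by
    intro n hn
    rw [hgnorm n]
    have h1 : ‖h (n+1)‖ ≤ C * ((n:ℝ)+1) ^ c := by
      have := hb (n+1) (le_trans hn (Nat.le_succ n))
      push_cast at this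
      exact this
    rw [div_le_iff₀ (by positivity), mul_assoc, ← Real.rpow_add (hpos n)]
    have he : c - (m:ℝ) + (m:ℝ) = c := by ring
    rw [he]
    exact h1
  have hsδ : ∀ p : ℝ, 1 < p → Summable (fun n : ℕ => ((n : ℝ) + 1) ^ (-p)) := by
    intro p hp
    have := (Real.summable_one_div_nat_rpow (p := p)).2 hp
    have h2 := (summable_nat_add_iff 1).2 this
    refine h2.congr fun n => ?_
    rw [Real.rpow_neg (hpos n).le, one_div]
    push_cast
    ring_nf
  have hsn : Summable (fun n : ℕ => ‖g n‖) := by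
    apply Summable.of_norm_bounded_eventually (g := fun n : ℕ => C * ((n:ℝ)+1) ^ (-(3/2 : ℝ)))
    · exact (hsδ (3/2) (by norm_num)).mul_left C
    · rw [Nat.cofinite_eq_atTop]
      filter_upwards [eventually_ge_atTop N₀] with n hn
      rw [norm_norm]
      refine (hgb n hn).trans ?_
      gcongr
      · linarith [Nat.cast_nonneg (α := ℝ) n]
      · have : (2:ℝ) ≤ (m:ℝ) := by exact_mod_cast hm
        linarith
  have hsg : Summable g := hsn.of_norm
  set K₀ : ℝ := ∑' n : ℕ, ((n : ℝ) + 1) ^ (-(1 + δ)) with hK₀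
  have hK₀sum : Summable (fun n : ℕ => ((n : ℝ) + 1) ^ (-(1 + δ))) :=
    hsδ (1 + δ) (by linarith)
  have hK₀0 : 0 ≤ K₀ := tsum_nonneg fun n => Real.rpow_nonneg (hpos n).le _
  refine ⟨C * K₀, by positivity, fun N hN => ?_⟩
  have hIcc : ∑ d ∈ Finset.Icc 1 N, h d / (d : ℂ) ^ m = ∑ n ∈ Finset.range N, g n := by
    rw [← Finset.Ico_add_one_right_eq_Icc, Finset.sum_Ico_eq_sum_range]
    exact Finset.sum_congr rfl fun i _ => by rw [add_comm 1 i]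
  have htail := Summable.sum_add_tsum_nat_add (f := g) N hsg
  have h1 : (∑' n : ℕ, g n) - ∑ d ∈ Finset.Icc 1 N, h d / (d : ℂ) ^ m
      = ∑' n : ℕ, g (n + N) := by
    rw [hIcc, ← htail]; ring
  rw [h1]
  have hsn' : Summable (fun n : ℕ => ‖g (n + N)‖) := (summable_nat_add_iff N).2 hsn
  have bnd : ∀ n : ℕ, ‖g (n + N)‖
      ≤ C * ((N:ℝ)+1) ^ (c + δ + 1 - m) * ((n:ℝ)+1) ^ (-(1 + δ)) := by
    intro n
    have h2 := hgb (n + N) (le_trans hN (Nat.le_add_left N n))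
    refine h2.trans ?_
    rw [mul_assoc]
    gcongr
    have hb0 : (0:ℝ) < ((n:ℕ):ℝ) + (N:ℝ) + 1 := by positivity
    have heq : (((n + N : ℕ) : ℝ) + 1) ^ (c - (m:ℝ))
        = ((n:ℝ) + (N:ℝ) + 1) ^ (c + δ + 1 - m) * ((n:ℝ) + (N:ℝ) + 1) ^ (-(1 + δ)) := by
      rw [← Real.rpow_add (by positivity)]
      push_cast
      ring_nf
    rw [heq]
    have e1 : ((n:ℝ) + (N:ℝ) + 1) ^ (c + δ + 1 - (m:ℝ)) ≤ ((N:ℝ)+1) ^ (c + δ + 1 - (m:ℝ)) := by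
      apply Real.rpow_le_rpow_of_nonpos (by positivity) (by linarith [Nat.cast_nonneg (α := ℝ) n])
      have : (2:ℝ) ≤ (m:ℝ) := by exact_mod_cast hm
      linarith
    have e2 : ((n:ℝ) + (N:ℝ) + 1) ^ (-(1 + δ)) ≤ ((n:ℝ)+1) ^ (-(1 + δ)) := by
      apply Real.rpow_le_rpow_of_nonpos (by positivity) (by linarith [Nat.cast_nonneg (α := ℝ) N])
      linarith
    exact mul_le_mul e1 e2 (Real.rpow_nonneg (by positivity) _) (Real.rpow_nonneg (by positivity) _)
  calc ‖∑' n : ℕ, g (n + N)‖ ≤ ∑' n : ℕ, ‖g (n + N)‖ := norm_tsum_le_tsum_norm hsn'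
    _ ≤ ∑' n : ℕ, C * ((N:ℝ)+1) ^ (c + δ + 1 - m) * ((n:ℝ)+1) ^ (-(1 + δ)) :=
        Summable.tsum_le_tsum bnd hsn' ((hK₀sum.mul_left _))
    _ = C * ((N:ℝ)+1) ^ (c + δ + 1 - m) * K₀ := tsum_mul_left
    _ = C * K₀ * ((N:ℝ)+1) ^ (c + δ + 1 - m) := by ring


/-- For `s ≥ 2` and `h` with `h(n) = O(n^ε)` for all `ε > 0`,
`∑_{dl ≤ x} h(d)/d^s = H_h(s+1) x - ∑_{d ≤ x} (h(d)/d^s) ϑ(x/d) - H_h(s)/2 + O(x^(1-s+ε))`,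
where `ϑ(t) = t - ⌊t⌋ - 1/2` and `H_h(α) = ∑_{n ≥ 1} h(n)/n^α`. -/
theorem sum_pairs_h_div_pow_asymptotic (s : ℕ) (hs : 2 ≤ s) (h : ℕ → ℂ)
    (hh : ∀ ε : ℝ, 0 < ε → (fun n : ℕ => h n) =O[atTop] fun n : ℕ => (n : ℝ) ^ ε) :
    ∀ ε : ℝ, 0 < ε →
      (fun x : ℝ =>
          (∑ d ∈ Finset.Icc 1 ⌊x⌋₊, h d / (d : ℂ) ^ s * (⌊x / d⌋₊ : ℂ)) -
            ((∑' n : ℕ, h (n + 1) / ((n + 1 : ℕ) : ℂ) ^ ((s : ℂ) + 1)) * x -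
              (∑ d ∈ Finset.Icc 1 ⌊x⌋₊,
                h d / (d : ℂ) ^ s * ((x / d - ⌊x / d⌋₊ - 1 / 2 : ℝ) : ℂ)) -
              (∑' n : ℕ, h (n + 1) / ((n + 1 : ℕ) : ℂ) ^ (s : ℂ)) / 2))
        =O[atTop] fun x : ℝ => x ^ (1 - (s : ℝ) + ε) := by
  intro ε hε
  set c : ℝ := min ε 1 / 2 with hcdef
  have hc : 0 < c := by positivity
  have hc2 : c ≤ 1/2 := by
    rw [hcdef]; have := min_le_right ε 1; linarith
  have hcε : 2 * c ≤ ε := by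
    rw [hcdef]; have := min_le_left ε 1; linarith
  obtain ⟨C, hC⟩ := (hh c hc).bound
  obtain ⟨N₀, hN₀⟩ := eventually_atTop.mp hC
  have hb : ∀ n : ℕ, N₀ ≤ n → ‖h n‖ ≤ |C| * (n : ℝ) ^ c := by
    intro n hn
    have h1 := hN₀ n hn
    have h2 : ‖((n:ℝ)) ^ c‖ = (n:ℝ) ^ c := by
      rw [Real.norm_eq_abs, abs_of_nonneg (Real.rpow_nonneg (Nat.cast_nonneg n) c)]
    rw [h2] at h1
    refine h1.trans ?_
    exact mul_le_mul_of_nonneg_right (le_abs_self C) (Real.rpow_nonneg (Nat.cast_nonneg n) c)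
  obtain ⟨K₁, hK₁0, hK₁⟩ := tail_bound s hs h |C| c c (abs_nonneg C) hc hc2 hc hc2 N₀ hb
  obtain ⟨K₂, hK₂0, hK₂⟩ := tail_bound (s+1) (by omega) h |C| c c (abs_nonneg C) hc hc2 hc hc2 N₀ hb
  -- rewrite the cpow exponents as natural powers
  have e1 : (∑' n : ℕ, h (n + 1) / ((n + 1 : ℕ) : ℂ) ^ ((s : ℂ) + 1))
      = ∑' n : ℕ, h (n + 1) / ((n + 1 : ℕ) : ℂ) ^ (s + 1 : ℕ) := by
    refine tsum_congr fun n => ?_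
    rw [show ((s:ℂ) + 1) = ((s + 1 : ℕ) : ℂ) by push_cast; ring, Complex.cpow_natCast]
  have e2 : (∑' n : ℕ, h (n + 1) / ((n + 1 : ℕ) : ℂ) ^ (s : ℂ))
      = ∑' n : ℕ, h (n + 1) / ((n + 1 : ℕ) : ℂ) ^ (s : ℕ) := by
    refine tsum_congr fun n => ?_
    rw [Complex.cpow_natCast]
  rw [isBigO_iff]
  refine ⟨K₂ + K₁ / 2, ?_⟩
  filter_upwards [eventually_ge_atTop ((N₀ : ℝ) + 1)] with x hx
  have hx1 : (1:ℝ) ≤ x := by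
    have : (0:ℝ) ≤ (N₀:ℝ) := Nat.cast_nonneg N₀
    linarith
  have hx0 : (0:ℝ) < x := by linarith
  set N : ℕ := ⌊x⌋₊ with hNdef
  have hNN₀ : N₀ ≤ N := Nat.le_floor (by linarith)
  have hA : x ≤ (N:ℝ) + 1 := (Nat.lt_floor_add_one x).le
  have hA0 : (0:ℝ) < (N:ℝ) + 1 := by positivity
  -- the algebraic identity
  have key : (∑ d ∈ Finset.Icc 1 N, h d / (d : ℂ) ^ s * (⌊x / d⌋₊ : ℂ))
      = x * (∑ d ∈ Finset.Icc 1 N, h d / (d : ℂ) ^ (s + 1))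
        - (∑ d ∈ Finset.Icc 1 N, h d / (d : ℂ) ^ s * ((x / d - ⌊x / d⌋₊ - 1 / 2 : ℝ) : ℂ))
        - (∑ d ∈ Finset.Icc 1 N, h d / (d : ℂ) ^ s) / 2 := by
    rw [Finset.mul_sum, Finset.sum_div, ← Finset.sum_sub_distrib, ← Finset.sum_sub_distrib]
    refine Finset.sum_congr rfl fun d hd => ?_
    have hd1 : 1 ≤ d := (Finset.mem_Icc.mp hd).1
    have hdc : (d : ℂ) ≠ 0 := Nat.cast_ne_zero.mpr (by omega)
    push_cast
    rw [pow_succ]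
    ring
  -- the error expression
  have herr : (∑ d ∈ Finset.Icc 1 N, h d / (d : ℂ) ^ s * (⌊x / d⌋₊ : ℂ)) -
      ((∑' n : ℕ, h (n + 1) / ((n + 1 : ℕ) : ℂ) ^ ((s : ℂ) + 1)) * x -
        (∑ d ∈ Finset.Icc 1 N, h d / (d : ℂ) ^ s * ((x / d - ⌊x / d⌋₊ - 1 / 2 : ℝ) : ℂ)) -
        (∑' n : ℕ, h (n + 1) / ((n + 1 : ℕ) : ℂ) ^ (s : ℂ)) / 2)
      = (x : ℂ) * ((∑ d ∈ Finset.Icc 1 N, h d / (d : ℂ) ^ (s + 1))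
            - (∑' n : ℕ, h (n + 1) / ((n + 1 : ℕ) : ℂ) ^ (s + 1 : ℕ)))
        + ((∑' n : ℕ, h (n + 1) / ((n + 1 : ℕ) : ℂ) ^ (s : ℕ))
            - (∑ d ∈ Finset.Icc 1 N, h d / (d : ℂ) ^ s)) / 2 := by
    rw [key, e1, e2]; ring
  rw [herr]
  have b2 : ‖(∑ d ∈ Finset.Icc 1 N, h d / (d : ℂ) ^ (s + 1))
      - (∑' n : ℕ, h (n + 1) / ((n + 1 : ℕ) : ℂ) ^ (s + 1 : ℕ))‖
      ≤ K₂ * ((N:ℝ) + 1) ^ (c + c + 1 - (s + 1 : ℕ)) := by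
    rw [norm_sub_rev]; exact hK₂ N hNN₀
  have b1 : ‖(∑' n : ℕ, h (n + 1) / ((n + 1 : ℕ) : ℂ) ^ (s : ℕ))
      - (∑ d ∈ Finset.Icc 1 N, h d / (d : ℂ) ^ s)‖
      ≤ K₁ * ((N:ℝ) + 1) ^ (c + c + 1 - (s : ℕ)) := hK₁ N hNN₀
  have hs2 : (2:ℝ) ≤ (s:ℝ) := by exact_mod_cast hs
  have r2 : ((N:ℝ) + 1) ^ (c + c + 1 - ((s:ℝ) + 1)) ≤ x ^ (c + c + 1 - ((s:ℝ) + 1)) :=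
    Real.rpow_le_rpow_of_nonpos hx0 hA (by linarith)
  have r1 : ((N:ℝ) + 1) ^ (c + c + 1 - (s:ℝ)) ≤ x ^ (c + c + 1 - (s:ℝ)) :=
    Real.rpow_le_rpow_of_nonpos hx0 hA (by linarith)
  have hxmul : x * x ^ (c + c + 1 - ((s:ℝ) + 1)) = x ^ (c + c + 1 - (s:ℝ)) := by
    nth_rewrite 1 [← Real.rpow_one x]
    rw [← Real.rpow_add hx0]
    ring_nf
  have hexp : x ^ (c + c + 1 - (s:ℝ)) ≤ x ^ (1 - (s:ℝ) + ε) :=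
    Real.rpow_le_rpow_of_exponent_le hx1 (by linarith)
  have hxc : ‖(x:ℂ)‖ = x := by
    rw [Complex.norm_real, Real.norm_eq_abs, abs_of_pos hx0]
  have hnormx : ‖x ^ (1 - (s:ℝ) + ε)‖ = x ^ (1 - (s:ℝ) + ε) := by
    rw [Real.norm_eq_abs, abs_of_nonneg (Real.rpow_nonneg hx0.le _)]
  rw [hnormx]
  calc ‖(x : ℂ) * ((∑ d ∈ Finset.Icc 1 N, h d / (d : ℂ) ^ (s + 1))
            - (∑' n : ℕ, h (n + 1) / ((n + 1 : ℕ) : ℂ) ^ (s + 1 : ℕ)))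
        + ((∑' n : ℕ, h (n + 1) / ((n + 1 : ℕ) : ℂ) ^ (s : ℕ))
            - (∑ d ∈ Finset.Icc 1 N, h d / (d : ℂ) ^ s)) / 2‖
      ≤ x * ‖(∑ d ∈ Finset.Icc 1 N, h d / (d : ℂ) ^ (s + 1))
            - (∑' n : ℕ, h (n + 1) / ((n + 1 : ℕ) : ℂ) ^ (s + 1 : ℕ))‖
        + ‖(∑' n : ℕ, h (n + 1) / ((n + 1 : ℕ) : ℂ) ^ (s : ℕ))
            - (∑ d ∈ Finset.Icc 1 N, h d / (d : ℂ) ^ s)‖ / 2 := by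
        refine (norm_add_le _ _).trans ?_
        rw [norm_mul, hxc]
        gcongr
        rw [norm_div]
        simp
    _ ≤ x * (K₂ * ((N:ℝ) + 1) ^ (c + c + 1 - (s + 1 : ℕ)))
        + (K₁ * ((N:ℝ) + 1) ^ (c + c + 1 - (s : ℕ))) / 2 := by
        gcongr
    _ ≤ x * (K₂ * x ^ (c + c + 1 - ((s:ℝ) + 1))) + (K₁ * x ^ (c + c + 1 - (s:ℝ))) / 2 := by
        push_cast
        gcongr
    _ = K₂ * (x * x ^ (c + c + 1 - ((s:ℝ) + 1))) + (K₁ / 2) * x ^ (c + c + 1 - (s:ℝ)) := by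
        ring
    _ = (K₂ + K₁ / 2) * x ^ (c + c + 1 - (s:ℝ)) := by rw [hxmul]; ring
    _ ≤ (K₂ + K₁ / 2) * x ^ (1 - (s:ℝ) + ε) := by
        have : (0:ℝ) ≤ K₂ + K₁ / 2 := by linarith
        exact mul_le_mul_of_nonneg_left hexp this
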